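/- arXiv:2412.06663 — 2 statements merged into one kernel-verified Lean document; each statement's English description precedes it below -/
import Mathlib

section
/- Assume P is transitive and satisfies the Strong Supplementation Principle. Then for all x, y ∈ U and all S, Z : Set U: if every ingrediens of x overlaps some element of S, S ⊆ Z, and every element of Z is an ingrediens of y, then Ing x y. -/
variable {U : Type*}

/-- `x` is an ingrediens of `y`. -/
def Ing (P : U → U → Prop) (x y : U) : Prop := x = y ∨ P x y

/-- `x` and `y` overlap. -/
def Ov (P : U → U → Prop) (x y : U) : Prop := ∃ z, Ing P z x ∧ Ing P z y

/-- `x` is exterior to `y`. -/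
def MExt (P : U → U → Prop) (x y : U) : Prop := ¬ Ov P x y

/-- `x` is a mereological sum of all elements of `S`. -/
def MSum (P : U → U → Prop) (x : U) (S : Set U) : Prop :=
  (∀ s ∈ S, Ing P s x) ∧ ∀ u, Ing P u x → ∃ s ∈ S, Ov P s u

/-- `x` is a supremum (least upper bound) of `S`. -/
def MSup (P : U → U → Prop) (x : U) (S : Set U) : Prop :=
  (∀ s ∈ S, Ing P s x) ∧ ∀ u, (∀ s ∈ S, Ing P s u) → Ing P x u

/-- `x` and `y` cross (properly overlap). -/
def POv (P : U → U → Prop) (x y : U) : Prop :=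
  x ≠ y ∧ ¬ P x y ∧ ¬ P y x ∧ ∃ z, P z x ∧ P z y

section

variable {P : U → U → Prop} {x y z : U}

theorem Ing.trans (htrans : ∀ x y z, P x y → P y z → P x z)
    (hxy : Ing P x y) (hyz : Ing P y z) : Ing P x z := by
  rcases hxy with rfl | hxy
  · exact hyz
  · rcases hyz with rfl | hyz
    · exact Or.inr hxy
    · exact Or.inr (htrans _ _ _ hxy hyz)

theorem Ov.symm (h : Ov P x y) : Ov P y x :=
  let ⟨w, hwx, hwy⟩ := h
  ⟨w, hwy, hwx⟩

theorem Ov.mono_left (htrans : ∀ x y z, P x y → P y z → P x z)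
    (h : Ov P x y) (hxz : Ing P x z) : Ov P z y :=
  let ⟨w, hwx, hwy⟩ := h
  ⟨w, hwx.trans htrans hxz, hwy⟩

end

theorem stmt_7 (P : U → U → Prop)
    (htrans : ∀ x y z, P x y → P y z → P x z)
    (hSSP : ∀ x y, ¬ Ing P x y → ∃ z, Ing P z x ∧ MExt P z y) :
    ∀ (x y : U) (S Z : Set U),
      (∀ u, Ing P u x → ∃ s ∈ S, Ov P s u) → S ⊆ Z →
      (∀ z ∈ Z, Ing P z y) → Ing P x y := by
  intro x y S Z hx hSZ hZy
  by_contra hxy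
  obtain ⟨z, hzx, hzy⟩ := hSSP x y hxy
  obtain ⟨s, hs, hsz⟩ := hx z hzx
  exact hzy (hsz.mono_left htrans (hZy s (hSZ hs))).symm
end

section
/- If P satisfies the Strong Supplementation Principle, then whenever x and y cross (POv x y), some object is a part of x and exterior to y: ∀ x y, POv x y → ∃ z, P z x ∧ Ext z y. -/
variable {U : Type*}

/-! Strong supplementation applied to a crossing pair yields an ingrediens of `x` exterior to
`y`; it cannot be `x` itself, since `x` overlaps `y` through their common part. -/

section Crossing

variable {P : U → U → Prop} {x y : U}

theorem POv.not_ing (h : POv P x y) : ¬ Ing P x y := by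
  rintro (rfl | hxy)
  exacts [h.1 rfl, h.2.1 hxy]

theorem POv.ov (h : POv P x y) : Ov P x y :=
  let ⟨w, hwx, hwy⟩ := h.2.2.2
  ⟨w, Or.inr hwx, Or.inr hwy⟩

end Crossing

theorem stmt_8 (P : U → U → Prop)
    (hSSP : ∀ x y, ¬ Ing P x y → ∃ z, Ing P z x ∧ MExt P z y) :
    ∀ x y, POv P x y → ∃ z, P z x ∧ MExt P z y := by
  intro x y hcross
  obtain ⟨z, rfl | hzx, hzy⟩ := hSSP x y hcross.not_ing
  · exact absurd hcross.ov hzy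
  · exact ⟨z, hzx, hzy⟩
end
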